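/- arXiv:1605.02484 — 3 statements merged into one kernel-verified Lean document; each statement's English description precedes it below -/
import Mathlib

section
/- Let a, b be positive real numbers and ν ∈ (0,1). Then (a+b)/2 ≥ H_ν(a,b) + Σ_{k=0}^{∞} r_k [ H_{m_k/2^k}(a,b) − 2 H_{(2m_k+1)/2^{k+1}}(a,b) + H_{(m_k+1)/2^k}(a,b) ], where the infinite series is interpreted as its sum (the terms are nonnegative). -/
/-- `r ν k`: the recursively defined coefficients, `r 0 = min {ν, 1-ν}`,
`r k = min {2 r (k-1), 1 - 2 r (k-1)}`. -/
noncomputable def r (ν : ℝ) : ℕ → ℝ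
  | 0 => min ν (1 - ν)
  | k + 1 => min (2 * r ν k) (1 - 2 * r ν k)

/-- `m ν k = ⌊2^k ν⌋`, as a real number. -/
noncomputable def m (ν : ℝ) (k : ℕ) : ℝ := ⌊2 ^ k * ν⌋


/-- The Heinz mean `H_μ(a,b) = (a^(1-μ) b^μ + a^μ b^(1-μ))/2`. -/
noncomputable def H (a b μ : ℝ) : ℝ := (a ^ (1 - μ) * b ^ μ + a ^ μ * b ^ (1 - μ)) / 2

/-- fractional part of `2^k ν` -/
noncomputable def tt (ν : ℝ) (k : ℕ) : ℝ := Int.fract (2 ^ k * ν)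

lemma m_eq (ν : ℝ) (k : ℕ) : m ν k = 2 ^ k * ν - tt ν k := by
  rw [m, tt, Int.self_sub_fract]

lemma tt_nonneg (ν : ℝ) (k : ℕ) : 0 ≤ tt ν k := Int.fract_nonneg _
lemma tt_lt_one (ν : ℝ) (k : ℕ) : tt ν k < 1 := Int.fract_lt_one _

lemma floor_two_mul (x : ℝ) :
    ⌊2 * x⌋ = if Int.fract x < 1 / 2 then 2 * ⌊x⌋ else 2 * ⌊x⌋ + 1 := by
  have hx : x = ⌊x⌋ + Int.fract x := (Int.floor_add_fract x).symm
  have h0 : (0 : ℝ) ≤ Int.fract x := Int.fract_nonneg x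
  have h1 : Int.fract x < 1 := Int.fract_lt_one x
  split_ifs with h
  · rw [Int.floor_eq_iff]
    constructor <;> push_cast <;> nlinarith
  · push_neg at h
    rw [Int.floor_eq_iff]
    constructor <;> push_cast <;> nlinarith

lemma m_succ_left {ν : ℝ} {k : ℕ} (h : tt ν k < 1 / 2) :
    m ν (k + 1) = 2 * m ν k := by
  have : (2 : ℝ) ^ (k + 1) * ν = 2 * (2 ^ k * ν) := by ring
  rw [m, this, floor_two_mul, if_pos (show Int.fract (2 ^ k * ν) < 1 / 2 from h)]
  push_cast [m]; ring

lemma m_succ_right {ν : ℝ} {k : ℕ} (h : ¬ tt ν k < 1 / 2) :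
    m ν (k + 1) = 2 * m ν k + 1 := by
  have : (2 : ℝ) ^ (k + 1) * ν = 2 * (2 ^ k * ν) := by ring
  rw [m, this, floor_two_mul, if_neg (show ¬ Int.fract (2 ^ k * ν) < 1 / 2 from h)]
  push_cast [m]; ring

lemma tt_succ_left {ν : ℝ} {k : ℕ} (h : tt ν k < 1 / 2) :
    tt ν (k + 1) = 2 * tt ν k := by
  have h1 := m_eq ν (k + 1)
  have h2 := m_eq ν k
  rw [m_succ_left h, show (2:ℝ) ^ (k+1) * ν = 2 * (2 ^ k * ν) by ring] at h1
  linarith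

lemma tt_succ_right {ν : ℝ} {k : ℕ} (h : ¬ tt ν k < 1 / 2) :
    tt ν (k + 1) = 2 * tt ν k - 1 := by
  have h1 := m_eq ν (k + 1)
  have h2 := m_eq ν k
  rw [m_succ_right h, show (2:ℝ) ^ (k+1) * ν = 2 * (2 ^ k * ν) by ring] at h1
  linarith

lemma r_eq {ν : ℝ} (hν : ν ∈ Set.Ioo (0 : ℝ) 1) (k : ℕ) :
    r ν k = min (tt ν k) (1 - tt ν k) := by
  induction k with
  | zero =>
    have : tt ν 0 = ν := by
      simp [tt, Int.fract_eq_self.2 ⟨hν.1.le, hν.2⟩]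
    simp [r, this]
  | succ k ih =>
    by_cases h : tt ν k < 1 / 2
    · have hmin : min (tt ν k) (1 - tt ν k) = tt ν k := min_eq_left (by linarith)
      rw [show r ν (k+1) = min (2 * r ν k) (1 - 2 * r ν k) from rfl, ih, hmin,
        tt_succ_left h]
    · push_neg at h
      have hmin : min (tt ν k) (1 - tt ν k) = 1 - tt ν k := min_eq_right (by linarith)
      rw [show r ν (k+1) = min (2 * r ν k) (1 - 2 * r ν k) from rfl, ih, hmin,
        tt_succ_right (by linarith)]
      rw [min_comm]
      congr 1 <;> ring

lemma r_nonneg {ν : ℝ} (hν : ν ∈ Set.Ioo (0 : ℝ) 1) (k : ℕ) : 0 ≤ r ν k := by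
  rw [r_eq hν k]
  exact le_min (tt_nonneg ν k) (by linarith [tt_lt_one ν k])

lemma convexOn_exp_affine (c d : ℝ) :
    ConvexOn ℝ Set.univ (fun μ : ℝ => Real.exp (c + d * μ)) := by
  refine ⟨convex_univ, fun x _ y _ p q hp hq hpq => ?_⟩
  have h := convexOn_exp.2 (Set.mem_univ (c + d * x)) (Set.mem_univ (c + d * y)) hp hq hpq
  simp only [smul_eq_mul] at h ⊢
  have heq : c + d * (p * x + q * y) = p * (c + d * x) + q * (c + d * y) := by
    linear_combination (-c) * hpq
  rw [heq]
  exact h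

lemma convexOn_H {a b : ℝ} (ha : 0 < a) (hb : 0 < b) :
    ConvexOn ℝ Set.univ (H a b) := by
  have hfun : H a b = fun μ : ℝ =>
      (1/2 : ℝ) * Real.exp (Real.log a + (Real.log b - Real.log a) * μ)
      + (1/2 : ℝ) * Real.exp (Real.log b + (Real.log a - Real.log b) * μ) := by
    funext μ
    rw [H, Real.rpow_def_of_pos ha, Real.rpow_def_of_pos hb,
      Real.rpow_def_of_pos ha, Real.rpow_def_of_pos hb, ← Real.exp_add, ← Real.exp_add]
    rw [show Real.log a * (1 - μ) + Real.log b * μ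
        = Real.log a + (Real.log b - Real.log a) * μ by ring,
      show Real.log a * μ + Real.log b * (1 - μ)
        = Real.log b + (Real.log a - Real.log b) * μ by ring]
    ring
  rw [hfun]
  have h1 := (convexOn_exp_affine (Real.log a) (Real.log b - Real.log a)).smul
    (by norm_num : (0:ℝ) ≤ 1/2)
  have h2 := (convexOn_exp_affine (Real.log b) (Real.log a - Real.log b)).smul
    (by norm_num : (0:ℝ) ≤ 1/2)
  exact h1.add h2

/-- linear interpolation of `H` on the `k`-th dyadic interval containing `ν` -/
noncomputable def LL (a b ν : ℝ) (k : ℕ) : ℝ :=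
  (1 - tt ν k) * H a b (m ν k / 2 ^ k) + tt ν k * H a b ((m ν k + 1) / 2 ^ k)

/-- the second-difference term -/
noncomputable def D (a b ν : ℝ) (k : ℕ) : ℝ :=
  H a b (m ν k / 2 ^ k) - 2 * H a b ((2 * m ν k + 1) / 2 ^ (k + 1)) +
    H a b ((m ν k + 1) / 2 ^ k)

lemma D_nonneg {a b : ℝ} (ha : 0 < a) (hb : 0 < b) (ν : ℝ) (k : ℕ) :
    0 ≤ D a b ν k := by
  have hf := convexOn_H ha hb
  have hmid := hf.2 (Set.mem_univ (m ν k / 2 ^ k)) (Set.mem_univ ((m ν k + 1) / 2 ^ k))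
    (by norm_num : (0:ℝ) ≤ 1/2) (by norm_num : (0:ℝ) ≤ 1/2) (by norm_num)
  simp only [smul_eq_mul] at hmid
  have h2 : ((2:ℝ) ^ k) ≠ 0 := by positivity
  have harg : (1/2 : ℝ) * (m ν k / 2 ^ k) + (1/2 : ℝ) * ((m ν k + 1) / 2 ^ k)
      = (2 * m ν k + 1) / 2 ^ (k + 1) := by
    field_simp
    ring
  rw [harg] at hmid
  simp only [D]
  linarith

lemma H_le_LL {a b ν : ℝ} (ha : 0 < a) (hb : 0 < b) (k : ℕ) :
    H a b ν ≤ LL a b ν k := by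
  have hf := convexOn_H ha hb
  have h := hf.2 (Set.mem_univ (m ν k / 2 ^ k)) (Set.mem_univ ((m ν k + 1) / 2 ^ k))
    (sub_nonneg.2 (tt_lt_one ν k).le) (tt_nonneg ν k) (by ring)
  simp only [smul_eq_mul] at h
  have h2 : ((2:ℝ) ^ k) ≠ 0 := by positivity
  have harg : (1 - tt ν k) * (m ν k / 2 ^ k) + tt ν k * ((m ν k + 1) / 2 ^ k) = ν := by
    rw [m_eq]
    field_simp
    ring
  rw [harg] at h
  exact h

lemma step_le {a b ν : ℝ} (ha : 0 < a) (hb : 0 < b) (hν : ν ∈ Set.Ioo (0 : ℝ) 1) (k : ℕ) :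
    LL a b ν (k + 1) + r ν k * D a b ν k ≤ LL a b ν k := by
  have hd := D_nonneg ha hb ν k
  have hr := r_eq hν k
  have h2 : ((2:ℝ) ^ k) ≠ 0 := by positivity
  by_cases h : tt ν k < 1 / 2
  · have h1 : m ν (k + 1) / 2 ^ (k + 1) = m ν k / 2 ^ k := by
      rw [m_succ_left h]; field_simp; ring
    have h2' : (m ν (k + 1) + 1) / 2 ^ (k + 1) = (2 * m ν k + 1) / 2 ^ (k + 1) := by
      rw [m_succ_left h]
    have h3 := tt_succ_left h
    have hle : r ν k ≤ tt ν k := hr ▸ min_le_left _ _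
    have hprod : 0 ≤ (tt ν k - r ν k) * D a b ν k := mul_nonneg (by linarith) hd
    simp only [LL, D, h1, h2', h3]
    simp only [D] at hprod
    nlinarith [hprod]
  · have h1 : m ν (k + 1) / 2 ^ (k + 1) = (2 * m ν k + 1) / 2 ^ (k + 1) := by
      rw [m_succ_right h]
    have h2' : (m ν (k + 1) + 1) / 2 ^ (k + 1) = (m ν k + 1) / 2 ^ k := by
      rw [m_succ_right h]; field_simp; ring
    have h3 := tt_succ_right h
    have hle : r ν k ≤ 1 - tt ν k := hr ▸ min_le_right _ _
    have hprod : 0 ≤ (1 - tt ν k - r ν k) * D a b ν k := mul_nonneg (by linarith) hd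
    simp only [LL, D, h1, h2', h3]
    simp only [D] at hprod
    nlinarith [hprod]

lemma LL_zero {a b ν : ℝ} (hν : ν ∈ Set.Ioo (0 : ℝ) 1) : LL a b ν 0 = (a + b) / 2 := by
  have ht : tt ν 0 = ν := by
    simp [tt, Int.fract_eq_self.2 ⟨hν.1.le, hν.2⟩]
  have hm : m ν 0 = 0 := by
    simp only [m, pow_zero, one_mul, Int.cast_eq_zero]
    rw [Int.floor_eq_zero_iff]
    exact ⟨hν.1.le, hν.2⟩
  have e0 : m ν 0 / 2 ^ 0 = (0 : ℝ) := by rw [hm]; norm_num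
  have e1 : (m ν 0 + 1) / 2 ^ 0 = (1 : ℝ) := by rw [hm]; norm_num
  have hH0 : H a b 0 = (a + b) / 2 := by simp [H]
  have hH1 : H a b 1 = (a + b) / 2 := by simp [H]; ring
  rw [LL, e0, e1, ht, hH0, hH1]
  ring

theorem stmt3 (a b ν : ℝ) (ha : 0 < a) (hb : 0 < b) (hν : ν ∈ Set.Ioo (0 : ℝ) 1) :
    (a + b) / 2 ≥ H a b ν +
      ∑' k : ℕ, r ν k *
        (H a b (m ν k / 2 ^ k) - 2 * H a b ((2 * m ν k + 1) / 2 ^ (k + 1)) +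
          H a b ((m ν k + 1) / 2 ^ k)) := by
  have hg : ∀ k, 0 ≤ r ν k * D a b ν k := fun k =>
    mul_nonneg (r_nonneg hν k) (D_nonneg ha hb ν k)
  have hbound : ∀ N, ∑ k ∈ Finset.range N, r ν k * D a b ν k ≤ (a + b) / 2 - H a b ν := by
    intro N
    have hb1 : ∑ k ∈ Finset.range N, r ν k * D a b ν k ≤ LL a b ν 0 - LL a b ν N := by
      induction N with
      | zero => simp
      | succ n ih =>
        rw [Finset.sum_range_succ]
        have := step_le ha hb hν n
        linarith
    have hN := H_le_LL (ν := ν) ha hb N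
    have h0 := LL_zero (a := a) (b := b) hν
    linarith
  have htsum : ∑' k, r ν k * D a b ν k ≤ (a + b) / 2 - H a b ν :=
    Real.tsum_le_of_sum_range_le hg hbound
  have : (∑' k : ℕ, r ν k *
      (H a b (m ν k / 2 ^ k) - 2 * H a b ((2 * m ν k + 1) / 2 ^ (k + 1)) +
        H a b ((m ν k + 1) / 2 ^ k))) = ∑' k, r ν k * D a b ν k := rfl
  rw [ge_iff_le, this]
  linarith
end

section
/- Let a, b be positive real numbers and ν ∈ (0,1). Then (1−ν)a² + νb² ≤ (a^{1−ν}b^{ν})² + (a − b)² − Σ_{k=0}^{∞} r_k [ a^{m_k/2^k} b^{1−m_k/2^k} − a^{(m_k+1)/2^k} b^{1−(m_k+1)/2^k} ]², where the infinite series is interpreted as its sum (the terms are nonnegative). -/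
/-- The k-th term (without coefficient) of the series. -/
noncomputable def T (ν a b : ℝ) (k : ℕ) : ℝ :=
  a ^ (m ν k / 2 ^ k) * b ^ (1 - m ν k / 2 ^ k) -
    a ^ ((m ν k + 1) / 2 ^ k) * b ^ (1 - (m ν k + 1) / 2 ^ k)

lemma r_succ (ν : ℝ) (k : ℕ) : r ν (k + 1) = min (2 * r ν k) (1 - 2 * r ν k) := rfl

lemma r_zero (ν : ℝ) : r ν 0 = min ν (1 - ν) := rfl

lemma r_shift (ν μ : ℝ) (h : r ν 1 = r μ 0) : ∀ k, r ν (k + 1) = r μ k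
  | 0 => h
  | (k + 1) => by rw [r_succ, r_shift ν μ h k, ← r_succ]

lemma r_shift_lo {ν : ℝ} (h : ν ≤ 1 / 2) : ∀ k, r ν (k + 1) = r (2 * ν) k := by
  refine r_shift _ _ ?_
  rw [r_succ, r_zero, r_zero, min_eq_left (by linarith : ν ≤ 1 - ν)]

lemma r_shift_hi {ν : ℝ} (h : 1 / 2 ≤ ν) : ∀ k, r ν (k + 1) = r (2 * ν - 1) k := by
  refine r_shift _ _ ?_
  rw [r_succ, r_zero, r_zero, min_eq_right (by linarith : 1 - ν ≤ ν), min_comm]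
  congr 1 <;> ring

lemma r_half : ∀ k, r (1 / 2 : ℝ) (k + 1) = 0 := by
  intro k
  induction k with
  | zero =>
    rw [r_succ, r_zero]
    norm_num
  | succ k ih =>
    rw [r_succ, ih]
    norm_num

lemma r_nonneg_s7 {ν : ℝ} (h0 : 0 ≤ ν) (h1 : ν ≤ 1) : ∀ k, 0 ≤ r ν k ∧ r ν k ≤ 1 / 2 := by
  intro k
  induction k with
  | zero =>
    constructor
    · exact le_min h0 (by linarith)
    · rcases le_total ν (1 / 2) with h | h
      · exact le_trans (min_le_left _ _) h
      · exact le_trans (min_le_right _ _) (by linarith)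
  | succ k ih =>
    obtain ⟨ih0, ih1⟩ := ih
    rw [r_succ]
    constructor
    · exact le_min (by linarith) (by linarith)
    · rcases le_total (2 * r ν k) (1 / 2) with h | h
      · exact le_trans (min_le_left _ _) h
      · exact le_trans (min_le_right _ _) (by linarith)

lemma m_zero {ν : ℝ} (hν : ν ∈ Set.Ioo (0 : ℝ) 1) : m ν 0 = 0 := by
  obtain ⟨h1, h2⟩ := hν
  simp only [m, pow_zero, one_mul, Int.cast_eq_zero]
  exact Int.floor_eq_zero_iff.mpr ⟨h1.le, h2⟩

lemma m_shift_lo (ν : ℝ) (k : ℕ) : m ν (k + 1) = m (2 * ν) k := by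
  unfold m
  rw [show (2 : ℝ) ^ (k + 1) * ν = 2 ^ k * (2 * ν) by ring]

lemma m_shift_hi (ν : ℝ) (k : ℕ) : m ν (k + 1) = m (2 * ν - 1) k + 2 ^ k := by
  unfold m
  have h : (2 : ℝ) ^ (k + 1) * ν = 2 ^ k * (2 * ν - 1) + ((2 ^ k : ℤ) : ℝ) := by
    push_cast; ring
  rw [h, Int.floor_add_intCast]
  push_cast; ring

lemma T_zero {ν a b : ℝ} (hν : ν ∈ Set.Ioo (0 : ℝ) 1) : T ν a b 0 = b - a := by
  unfold T
  rw [m_zero hν]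
  norm_num

lemma half_lo (a b : ℝ) (ha : 0 < a) (hb : 0 < b) (s : ℝ) :
    ((a * b) ^ (2⁻¹ : ℝ)) ^ s * b ^ (1 - s) = a ^ (s / 2) * b ^ (1 - s / 2) := by
  rw [← Real.rpow_mul (by positivity), Real.mul_rpow ha.le hb.le, mul_assoc,
    ← Real.rpow_add hb, show (2⁻¹ : ℝ) * s = s / 2 by ring,
    show s / 2 + (1 - s) = 1 - s / 2 by ring]

lemma half_hi (a b : ℝ) (ha : 0 < a) (hb : 0 < b) (s : ℝ) :
    a ^ s * ((a * b) ^ (2⁻¹ : ℝ)) ^ (1 - s) = a ^ ((1 + s) / 2) * b ^ (1 - (1 + s) / 2) := by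
  rw [← Real.rpow_mul (by positivity), Real.mul_rpow ha.le hb.le, ← mul_assoc,
    ← Real.rpow_add ha, show s + 2⁻¹ * (1 - s) = (1 + s) / 2 by ring,
    show (2⁻¹ : ℝ) * (1 - s) = 1 - (1 + s) / 2 by ring]

lemma T_lo (ν a b : ℝ) (ha : 0 < a) (hb : 0 < b) (k : ℕ) :
    T ν a b (k + 1) = T (2 * ν) ((a * b) ^ (2⁻¹ : ℝ)) b k := by
  have h2k : (2 : ℝ) ^ k ≠ 0 := by positivity
  unfold T
  rw [m_shift_lo, half_lo a b ha hb (m (2 * ν) k / 2 ^ k),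
    half_lo a b ha hb ((m (2 * ν) k + 1) / 2 ^ k), pow_succ,
    show m (2 * ν) k / (2 ^ k * 2) = m (2 * ν) k / 2 ^ k / 2 by ring,
    show (m (2 * ν) k + 1) / (2 ^ k * 2) = (m (2 * ν) k + 1) / 2 ^ k / 2 by ring]

lemma T_hi (ν a b : ℝ) (ha : 0 < a) (hb : 0 < b) (k : ℕ) :
    T ν a b (k + 1) = T (2 * ν - 1) a ((a * b) ^ (2⁻¹ : ℝ)) k := by
  have h2k : (2 : ℝ) ^ k ≠ 0 := by positivity
  unfold T
  rw [m_shift_hi, half_hi a b ha hb (m (2 * ν - 1) k / 2 ^ k),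
    half_hi a b ha hb ((m (2 * ν - 1) k + 1) / 2 ^ k), pow_succ,
    show (m (2 * ν - 1) k + 2 ^ k) / (2 ^ k * 2) = (1 + m (2 * ν - 1) k / 2 ^ k) / 2 by
      field_simp; ring,
    show (m (2 * ν - 1) k + 2 ^ k + 1) / (2 ^ k * 2)
        = (1 + (m (2 * ν - 1) k + 1) / 2 ^ k) / 2 by field_simp; ring]

/-- Base case: Kittaneh–Manasrah refinement (squared variables), for `ν ≤ 1/2`. -/
lemma base {a b ν : ℝ} (ha : 0 < a) (hb : 0 < b) (h0 : 0 < ν) (h : ν ≤ 1 / 2) :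
    min ν (1 - ν) * (b - a) ^ 2 ≤ ν * a ^ 2 + (1 - ν) * b ^ 2 - (a ^ ν * b ^ (1 - ν)) ^ 2 := by
  rw [min_eq_left (by linarith)]
  have h1 : (a ^ ν * b ^ (1 - ν)) ^ 2 = (a * b) ^ (2 * ν) * (b ^ 2) ^ ((1 : ℝ) - 2 * ν) := by
    rw [mul_pow, ← Real.rpow_natCast (a ^ ν) 2, ← Real.rpow_natCast (b ^ (1 - ν)) 2,
      ← Real.rpow_mul ha.le, ← Real.rpow_mul hb.le, Real.mul_rpow ha.le hb.le,
      ← Real.rpow_natCast b 2, ← Real.rpow_mul hb.le, mul_assoc, ← Real.rpow_add hb]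
    norm_num
    rw [show ν * 2 = 2 * ν by ring, show (1 - ν) * 2 = 2 * ν + 2 * (1 - 2 * ν) by ring]
  have h2 : (a * b) ^ (2 * ν) * (b ^ 2) ^ ((1 : ℝ) - 2 * ν)
      ≤ 2 * ν * (a * b) + (1 - 2 * ν) * b ^ 2 :=
    Real.geom_mean_le_arith_mean2_weighted (by linarith) (by linarith) (by positivity)
      (by positivity) (by ring)
  nlinarith [h1, h2]

/-- The key partial-sum inequality (in fact an identity up to the base case). -/
lemma key : ∀ (N : ℕ) (ν a b : ℝ), 0 < a → 0 < b → ν ∈ Set.Ioo (0 : ℝ) 1 →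
    ∑ k ∈ Finset.range (N + 1), r ν k * (T ν a b k) ^ 2
      ≤ ν * a ^ 2 + (1 - ν) * b ^ 2 - (a ^ ν * b ^ (1 - ν)) ^ 2 := by
  intro N
  induction N with
  | zero =>
    intro ν a b ha hb hν
    rw [Finset.sum_range_one, T_zero hν, r_zero]
    rcases le_total ν (1 / 2) with h | h
    · exact base ha hb hν.1 h
    · have h2 := base hb ha (by linarith [hν.2] : (0 : ℝ) < 1 - ν) (by linarith)
      rw [show (1 : ℝ) - (1 - ν) = ν by ring, min_comm] at h2
      nlinarith [h2]
  | succ N IH =>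
    intro ν a b ha hb hν
    rw [Finset.sum_range_succ', T_zero hν, r_zero]
    have hab : (0 : ℝ) < a * b := by positivity
    set c : ℝ := (a * b) ^ (2⁻¹ : ℝ) with hc
    have hcpos : 0 < c := Real.rpow_pos_of_pos hab _
    have hc2 : c ^ 2 = a * b := by
      rw [hc, ← Real.rpow_natCast ((a * b) ^ (2⁻¹ : ℝ)) 2, ← Real.rpow_mul hab.le]
      norm_num
    rcases lt_trichotomy ν (1 / 2) with hlt | heq | hgt
    · -- ν < 1/2 : reduce to 2ν with (c, b)
      have hcong : ∀ k ∈ Finset.range (N + 1),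
          r ν (k + 1) * (T ν a b (k + 1)) ^ 2 = r (2 * ν) k * (T (2 * ν) c b k) ^ 2 := by
        intro k _
        rw [r_shift_lo hlt.le, T_lo ν a b ha hb]
      rw [Finset.sum_congr rfl hcong]
      have hIH := IH (2 * ν) c b hcpos hb ⟨by linarith [hν.1], by linarith⟩
      have hH : c ^ (2 * ν) * b ^ (1 - 2 * ν) = a ^ ν * b ^ (1 - ν) := by
        rw [hc, ← Real.rpow_mul hab.le, show (2⁻¹ : ℝ) * (2 * ν) = ν by ring,
          Real.mul_rpow ha.le hb.le, mul_assoc, ← Real.rpow_add hb,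
          show ν + (1 - 2 * ν) = 1 - ν by ring]
      rw [hH] at hIH
      rw [min_eq_left (by linarith : ν ≤ 1 - ν)]
      nlinarith [hIH, hc2]
    · -- ν = 1/2 : tail vanishes
      subst heq
      have hz : ∑ k ∈ Finset.range (N + 1),
          r (1 / 2 : ℝ) (k + 1) * (T (1 / 2 : ℝ) a b (k + 1)) ^ 2 = 0 :=
        Finset.sum_eq_zero fun k _ => by rw [r_half]; ring
      rw [hz]
      have haa : (a ^ ((1 : ℝ) / 2)) ^ 2 = a := by
        rw [← Real.rpow_natCast (a ^ ((1 : ℝ) / 2)) 2, ← Real.rpow_mul ha.le]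
        norm_num
      have hbb : (b ^ (1 - (1 : ℝ) / 2)) ^ 2 = b := by
        rw [show (1 : ℝ) - 1 / 2 = 1 / 2 by norm_num,
          ← Real.rpow_natCast (b ^ ((1 : ℝ) / 2)) 2, ← Real.rpow_mul hb.le]
        norm_num
      have hH : (a ^ ((1 : ℝ) / 2) * b ^ (1 - (1 : ℝ) / 2)) ^ 2 = a * b := by
        rw [mul_pow, haa, hbb]
      rw [min_eq_left (by norm_num)]
      nlinarith [hH]
    · -- ν > 1/2 : reduce to 2ν - 1 with (a, c)
      have hcong : ∀ k ∈ Finset.range (N + 1),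
          r ν (k + 1) * (T ν a b (k + 1)) ^ 2
            = r (2 * ν - 1) k * (T (2 * ν - 1) a c k) ^ 2 := by
        intro k _
        rw [r_shift_hi hgt.le, T_hi ν a b ha hb]
      rw [Finset.sum_congr rfl hcong]
      have hIH := IH (2 * ν - 1) a c ha hcpos ⟨by linarith, by linarith [hν.2]⟩
      have hH : a ^ (2 * ν - 1) * c ^ (1 - (2 * ν - 1)) = a ^ ν * b ^ (1 - ν) := by
        rw [hc, ← Real.rpow_mul hab.le, show (2⁻¹ : ℝ) * (1 - (2 * ν - 1)) = 1 - ν by ring,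
          Real.mul_rpow ha.le hb.le, ← mul_assoc, ← Real.rpow_add ha,
          show 2 * ν - 1 + (1 - ν) = ν by ring]
      rw [hH] at hIH
      rw [min_eq_right (by linarith : 1 - ν ≤ ν)]
      nlinarith [hIH, hc2]

theorem stmt7 (a b ν : ℝ) (ha : 0 < a) (hb : 0 < b) (hν : ν ∈ Set.Ioo (0 : ℝ) 1) :
    (1 - ν) * a ^ 2 + ν * b ^ 2 ≤ (a ^ (1 - ν) * b ^ ν) ^ 2 + (a - b) ^ 2 -
      ∑' k : ℕ, r ν k *
        (a ^ (m ν k / 2 ^ k) * b ^ (1 - m ν k / 2 ^ k) -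
          a ^ ((m ν k + 1) / 2 ^ k) * b ^ (1 - (m ν k + 1) / 2 ^ k)) ^ 2 := by
  show (1 - ν) * a ^ 2 + ν * b ^ 2 ≤ (a ^ (1 - ν) * b ^ ν) ^ 2 + (a - b) ^ 2 -
      ∑' k : ℕ, r ν k * (T ν a b k) ^ 2
  have hnn : ∀ k, 0 ≤ r ν k * (T ν a b k) ^ 2 := fun k =>
    mul_nonneg (r_nonneg_s7 hν.1.le hν.2.le k).1 (sq_nonneg _)
  have hbd : ∀ n, ∑ k ∈ Finset.range n, r ν k * (T ν a b k) ^ 2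
      ≤ ν * a ^ 2 + (1 - ν) * b ^ 2 - (a ^ ν * b ^ (1 - ν)) ^ 2 := by
    intro n
    calc ∑ k ∈ Finset.range n, r ν k * (T ν a b k) ^ 2
        ≤ ∑ k ∈ Finset.range (n + 1), r ν k * (T ν a b k) ^ 2 :=
          Finset.sum_le_sum_of_subset_of_nonneg
            (Finset.range_subset_range.mpr (Nat.le_succ n)) (fun i _ _ => hnn i)
      _ ≤ _ := key n ν a b ha hb hν
  have hts : ∑' k : ℕ, r ν k * (T ν a b k) ^ 2
      ≤ ν * a ^ 2 + (1 - ν) * b ^ 2 - (a ^ ν * b ^ (1 - ν)) ^ 2 :=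
    Real.tsum_le_of_sum_range_le hnn hbd
  have hGH : a ^ (1 - ν) * b ^ ν * (a ^ ν * b ^ (1 - ν)) = a * b := by
    rw [show a ^ (1 - ν) * b ^ ν * (a ^ ν * b ^ (1 - ν))
        = a ^ (1 - ν) * a ^ ν * (b ^ ν * b ^ (1 - ν)) by ring,
      ← Real.rpow_add ha, ← Real.rpow_add hb, show (1 : ℝ) - ν + ν = 1 by ring,
      show ν + (1 - ν) = (1 : ℝ) by ring, Real.rpow_one, Real.rpow_one]
  nlinarith [hts, hGH, sq_nonneg (a ^ (1 - ν) * b ^ ν - a ^ ν * b ^ (1 - ν))]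
end

section
/- Let A, B be positive definite n×n complex matrices and ν ∈ (0,1). Then for every nonnegative integer n₀, in the Loewner order, (A + B)/2 ≥ H_ν(A,B) + Σ_{k=0}^{n₀} r_k [ H_{m_k/2^k}(A,B) − 2 H_{(2m_k+1)/2^{k+1}}(A,B) + H_{(m_k+1)/2^k}(A,B) ]. -/
open scoped ComplexOrder

variable {d : ℕ}

/-- Real power of a matrix via the functional calculus: for a Hermitian matrix with spectral
decomposition `A = U diag(λᵢ) U*`, `mpow A t = U diag(λᵢ^t) U*` (real powers `Real.rpow` of the
eigenvalues); junk value `A` for non-Hermitian `A`. -/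
noncomputable def mpow (A : Matrix (Fin d) (Fin d) ℂ) (t : ℝ) : Matrix (Fin d) (Fin d) ℂ :=
  if hA : A.IsHermitian then
    (hA.eigenvectorUnitary : Matrix (Fin d) (Fin d) ℂ) *
      Matrix.diagonal (fun i => ((hA.eigenvalues i ^ t : ℝ) : ℂ)) *
      star (hA.eigenvectorUnitary : Matrix (Fin d) (Fin d) ℂ)
  else A

/-- The μ-weighted geometric mean `A♯_μ B = A^{1/2} (A^{-1/2} B A^{-1/2})^μ A^{1/2}`. -/
noncomputable def sharp (A B : Matrix (Fin d) (Fin d) ℂ) (μ : ℝ) : Matrix (Fin d) (Fin d) ℂ :=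
  mpow A (1 / 2) * mpow (mpow A (-(1 / 2)) * B * mpow A (-(1 / 2))) μ * mpow A (1 / 2)


/-- The Heinz mean `H_μ(A,B) = (A♯_μ B + A♯_{1-μ} B)/2`. -/
noncomputable def heinz (A B : Matrix (Fin d) (Fin d) ℂ) (μ : ℝ) : Matrix (Fin d) (Fin d) ℂ :=
  ((1 : ℝ) / 2) • (sharp A B μ + sharp A B (1 - μ))

/-!
For `f` convex on `[0, 1]` (with values in any ordered vector space), let `c_k` be the value at
`ν` of the chord of `f` over the dyadic interval `[m_k / 2^k, (m_k + 1) / 2^k]` containing `ν`.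
Halving that interval lowers the chord by exactly `r_k` times the second difference
`f (m_k / 2^k) - 2 f ((2 m_k + 1) / 2^(k+1)) + f ((m_k + 1) / 2^k)`, so the sum telescopes to
`c_0 - c_(n+1) = (1 - ν) f 0 + ν f 1 - c_(n+1)`, and convexity gives `f ν ≤ c_(n+1)`.

This applies to `μ ↦ H_μ(A, B)` in the Loewner order: with `C = A^{-1/2} B A^{-1/2}` one has
`H_μ(A, B) = A^{1/2} h_μ(C) A^{1/2}` for `h_μ(x) = (x^μ + x^(1-μ)) / 2`, which is convex in `μ`
for every `x > 0`, while `H_0 = H_1 = (A + B) / 2`.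
-/

open scoped MatrixOrder
open Set

section Floor

variable {α : Type*} [Field α] [LinearOrder α] [IsStrictOrderedRing α] [FloorRing α] {x : α}

lemma Int.floor_two_mul_of_fract_lt (h : Int.fract x < 1 / 2) : ⌊2 * x⌋ = 2 * ⌊x⌋ := by
  rw [Int.floor_eq_iff]
  have := Int.floor_add_fract x
  have := Int.fract_nonneg x
  push_cast
  constructor <;> linarith

lemma Int.floor_two_mul_of_le_fract (h : 1 / 2 ≤ Int.fract x) : ⌊2 * x⌋ = 2 * ⌊x⌋ + 1 := by
  rw [Int.floor_eq_iff]
  have := Int.floor_add_fract x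
  have := Int.fract_lt_one x
  push_cast
  constructor <;> linarith

end Floor

noncomputable def dyadicFract (ν : ℝ) (k : ℕ) : ℝ := Int.fract (2 ^ k * ν)

section Dyadic

variable {ν : ℝ}

lemma m_add_dyadicFract (ν : ℝ) (k : ℕ) : m ν k + dyadicFract ν k = 2 ^ k * ν :=
  Int.floor_add_fract _

lemma dyadicFract_nonneg (ν : ℝ) (k : ℕ) : 0 ≤ dyadicFract ν k := Int.fract_nonneg _

lemma dyadicFract_lt_one (ν : ℝ) (k : ℕ) : dyadicFract ν k < 1 := Int.fract_lt_one _

lemma dyadicFract_zero (h0 : 0 ≤ ν) (h1 : ν < 1) : dyadicFract ν 0 = ν := by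
  rw [dyadicFract, pow_zero, one_mul, Int.fract_eq_self]
  exact ⟨h0, h1⟩

lemma m_zero_s14 (h0 : 0 ≤ ν) (h1 : ν < 1) : m ν 0 = 0 := by
  have := m_add_dyadicFract ν 0
  rw [dyadicFract_zero h0 h1, pow_zero, one_mul] at this
  linarith

/-- Passing from level `k` to level `k + 1` reads off the next binary digit of `ν`. -/
lemma m_succ_and_dyadicFract_succ (ν : ℝ) (k : ℕ) :
    (dyadicFract ν k < 1 / 2 ∧ m ν (k + 1) = 2 * m ν k ∧
      dyadicFract ν (k + 1) = 2 * dyadicFract ν k) ∨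
    (1 / 2 ≤ dyadicFract ν k ∧ m ν (k + 1) = 2 * m ν k + 1 ∧
      dyadicFract ν (k + 1) = 2 * dyadicFract ν k - 1) := by
  have hpow : (2 : ℝ) ^ (k + 1) * ν = 2 * (2 ^ k * ν) := by ring
  simp only [m, dyadicFract, ← Int.self_sub_floor, hpow]
  rcases lt_or_ge (Int.fract (2 ^ k * ν)) (1 / 2) with h | h
  · refine .inl ⟨by rwa [← Int.self_sub_floor] at h, ?_⟩
    rw [Int.floor_two_mul_of_fract_lt h]
    push_cast
    constructor <;> ring
  · refine .inr ⟨by rwa [← Int.self_sub_floor] at h, ?_⟩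
    rw [Int.floor_two_mul_of_le_fract h]
    push_cast
    constructor <;> ring

lemma r_eq_min_dyadicFract (h0 : 0 ≤ ν) (h1 : ν < 1) :
    ∀ k, r ν k = min (dyadicFract ν k) (1 - dyadicFract ν k)
  | 0 => by rw [r, dyadicFract_zero h0 h1]
  | k + 1 => by
    rw [r, r_eq_min_dyadicFract h0 h1 k]
    rcases m_succ_and_dyadicFract_succ ν k with ⟨h, -, ht⟩ | ⟨h, -, ht⟩
    · rw [min_eq_left (show dyadicFract ν k ≤ 1 - dyadicFract ν k by linarith), ht]
    · rw [min_eq_right (show 1 - dyadicFract ν k ≤ dyadicFract ν k by linarith), ht, min_comm]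
      congr 1 <;> ring

lemma m_div_pow_mem_Icc (h0 : 0 ≤ ν) (h1 : ν < 1) (k : ℕ) :
    m ν k / 2 ^ k ∈ Icc (0 : ℝ) 1 ∧ (m ν k + 1) / 2 ^ k ∈ Icc (0 : ℝ) 1 := by
  have hm0 : (0 : ℝ) ≤ m ν k := by
    rw [m]
    exact_mod_cast Int.floor_nonneg.mpr (by positivity)
  have hm1 : m ν k + 1 ≤ 2 ^ k := by
    have : ⌊2 ^ k * ν⌋ < ((2 ^ k : ℕ) : ℤ) := by
      rw [Int.floor_lt]
      push_cast
      exact mul_lt_of_lt_one_right (by positivity) h1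
    have := Int.add_one_le_of_lt this
    rw [m]
    exact_mod_cast this
  have hpos : (0 : ℝ) < 2 ^ k := by positivity
  refine ⟨⟨by positivity, ?_⟩, ⟨by positivity, ?_⟩⟩ <;>
    rw [div_le_one hpos] <;> linarith

end Dyadic

section Chord

variable {E : Type*} [AddCommGroup E] [Module ℝ E] {ν : ℝ}

/-- The value at `ν` of the chord of `f` over the dyadic interval `[m/2^k, (m+1)/2^k]` that
contains `ν`. -/
noncomputable def dyadicChord (f : ℝ → E) (ν : ℝ) (k : ℕ) : E :=
  (1 - dyadicFract ν k) • f (m ν k / 2 ^ k) + dyadicFract ν k • f ((m ν k + 1) / 2 ^ k)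

lemma dyadicChord_zero (f : ℝ → E) (h0 : 0 ≤ ν) (h1 : ν < 1) :
    dyadicChord f ν 0 = (1 - ν) • f 0 + ν • f 1 := by
  simp only [dyadicChord, dyadicFract_zero h0 h1, m_zero_s14 h0 h1, pow_zero, div_one, zero_add]

lemma dyadicChord_sub_dyadicChord_succ (f : ℝ → E) (h0 : 0 ≤ ν) (h1 : ν < 1) (k : ℕ) :
    dyadicChord f ν k - dyadicChord f ν (k + 1) = r ν k • (f (m ν k / 2 ^ k) -
      (2 : ℝ) • f ((2 * m ν k + 1) / 2 ^ (k + 1)) + f ((m ν k + 1) / 2 ^ k)) := by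
  rw [dyadicChord, dyadicChord, r_eq_min_dyadicFract h0 h1]
  have ht0 := dyadicFract_nonneg ν k
  have ht1 := dyadicFract_lt_one ν k
  rcases m_succ_and_dyadicFract_succ ν k with ⟨h, hm, ht⟩ | ⟨h, hm, ht⟩
  · rw [min_eq_left (by linarith), hm, ht,
      show 2 * m ν k / (2 : ℝ) ^ (k + 1) = m ν k / 2 ^ k by ring]
    module
  · rw [min_eq_right (by linarith), hm, ht,
      show (2 * m ν k + 1 + 1) / (2 : ℝ) ^ (k + 1) = (m ν k + 1) / 2 ^ k by ring]
    module

lemma ConvexOn.le_dyadicChord [PartialOrder E] {f : ℝ → E} (hf : ConvexOn ℝ (Icc 0 1) f)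
    (h0 : 0 ≤ ν) (h1 : ν < 1) (k : ℕ) : f ν ≤ dyadicChord f ν k := by
  have hν : (1 - dyadicFract ν k) • (m ν k / 2 ^ k) +
      dyadicFract ν k • ((m ν k + 1) / 2 ^ k) = ν := by
    have := m_add_dyadicFract ν k
    simp only [smul_eq_mul]
    field_simp
    linear_combination this
  have := hf.2 (m_div_pow_mem_Icc h0 h1 k).1 (m_div_pow_mem_Icc h0 h1 k).2
    (sub_nonneg.mpr (dyadicFract_lt_one ν k).le) (dyadicFract_nonneg ν k) (sub_add_cancel 1 _)
  rwa [hν] at this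

theorem ConvexOn.add_sum_dyadic_le [PartialOrder E] [IsOrderedAddMonoid E] {f : ℝ → E}
    (hf : ConvexOn ℝ (Icc 0 1) f) (h0 : 0 ≤ ν) (h1 : ν < 1) (n : ℕ) :
    f ν + ∑ k ∈ Finset.range n, r ν k • (f (m ν k / 2 ^ k) -
      (2 : ℝ) • f ((2 * m ν k + 1) / 2 ^ (k + 1)) + f ((m ν k + 1) / 2 ^ k)) ≤
      (1 - ν) • f 0 + ν • f 1 := by
  simp only [← dyadicChord_sub_dyadicChord_succ f h0 h1, Finset.sum_range_sub',
    dyadicChord_zero f h0 h1]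
  calc f ν + ((1 - ν) • f 0 + ν • f 1 - dyadicChord f ν n)
      ≤ dyadicChord f ν n + ((1 - ν) • f 0 + ν • f 1 - dyadicChord f ν n) := by
        gcongr
        exact hf.le_dyadicChord h0 h1 n
    _ = (1 - ν) • f 0 + ν • f 1 := add_sub_cancel _ _

end Chord

lemma convexOn_rpow_add_rpow_one_sub {x : ℝ} (hx : 0 < x) :
    ConvexOn ℝ univ fun μ : ℝ ↦ (x ^ μ + x ^ (1 - μ)) / 2 := by
  have h := ((convexOn_rpow_left hx).add
    ((convexOn_rpow_left (inv_pos.2 hx)).smul hx.le)).smul (one_half_pos (α := ℝ)).le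
  refine h.congr fun μ _ ↦ ?_
  simp only [Pi.add_apply, Real.rpow_sub hx, Real.inv_rpow hx.le, Real.rpow_one, smul_eq_mul]
  ring

lemma ConvexOn.star_left_conjugate {R : Type*} [Ring R] [StarRing R] [PartialOrder R]
    [StarOrderedRing R] [Module ℝ R] [SMulCommClass ℝ R R] [IsScalarTower ℝ R R]
    {s : Set ℝ} {f : ℝ → R} (hf : ConvexOn ℝ s f) (c : R) :
    ConvexOn ℝ s fun μ ↦ star c * f μ * c := by
  refine ⟨hf.1, fun μ hμ μ' hμ' a b ha hb hab ↦ ?_⟩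
  refine (star_left_conjugate_le_conjugate (hf.2 hμ hμ' ha hb hab) c).trans_eq ?_
  simp only [mul_add, add_mul, mul_smul_comm, smul_mul_assoc]

section MatrixCFC

variable {n 𝕜 : Type*} [RCLike 𝕜] [Fintype n] [DecidableEq n]

lemma Matrix.continuousOn_spectrum (f : ℝ → ℝ) (C : Matrix n n 𝕜) :
    ContinuousOn f (spectrum ℝ C) :=
  C.finite_real_spectrum.continuousOn f

lemma convexOn_cfc {s : Set ℝ} (hs : Convex ℝ s) {F : ℝ → ℝ → ℝ} {C : Matrix n n 𝕜}
    (hF : ∀ x ∈ spectrum ℝ C, ConvexOn ℝ s fun μ ↦ F μ x) :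
    ConvexOn ℝ s fun μ ↦ cfc (F μ) C := by
  have hc (g : ℝ → ℝ) := C.continuousOn_spectrum g
  refine ⟨hs, fun μ hμ μ' hμ' a b ha hb hab ↦ ?_⟩
  calc cfc (F (a • μ + b • μ')) C ≤ cfc (fun x ↦ a • F μ x + b • F μ' x) C :=
        cfc_mono (fun x hx ↦ (hF x hx).2 hμ hμ' ha hb hab) (hc _) (hc _)
    _ = a • cfc (F μ) C + b • cfc (F μ') C := by
        rw [cfc_add _ _ _ (hc _) (hc _), cfc_smul _ _ _ (hc _), cfc_smul _ _ _ (hc _)]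

end MatrixCFC

section Heinz

variable {A B : Matrix (Fin d) (Fin d) ℂ}

lemma mpow_eq_cfc (hA : A.IsHermitian) (t : ℝ) : mpow A t = cfc (fun x : ℝ ↦ x ^ t) A := by
  rw [hA.cfc_eq, Matrix.IsHermitian.cfc, Unitary.conjStarAlgAut_apply, mpow, dif_pos hA]
  rfl

lemma mpow_isHermitian (hA : A.IsHermitian) (t : ℝ) : (mpow A t).IsHermitian := by
  rw [mpow_eq_cfc hA]
  exact cfc_predicate _ A

lemma mpow_zero (hA : A.IsHermitian) : mpow A 0 = 1 := by
  simp only [mpow_eq_cfc hA, Real.rpow_zero]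
  exact cfc_const_one ℝ A

lemma mpow_one (hA : A.IsHermitian) : mpow A 1 = A := by
  simp only [mpow_eq_cfc hA, Real.rpow_one]
  exact cfc_id' ℝ A

lemma mpow_mul_mpow (hA : A.PosDef) (s t : ℝ) : mpow A s * mpow A t = mpow A (s + t) := by
  have hc (g : ℝ → ℝ) := A.continuousOn_spectrum g
  rw [mpow_eq_cfc hA.1, mpow_eq_cfc hA.1, mpow_eq_cfc hA.1, ← cfc_mul _ _ _ (hc _) (hc _)]
  exact cfc_congr fun x hx ↦ (Real.rpow_add (hA.isStrictlyPositive.spectrum_pos hx) s t).symm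

lemma mpow_half_mul_mpow_half (hA : A.PosDef) : mpow A (1 / 2) * mpow A (1 / 2) = A := by
  rw [mpow_mul_mpow hA, add_halves, mpow_one hA.1]

lemma mpow_half_mul_mpow_neg_half (hA : A.PosDef) :
    mpow A (1 / 2) * mpow A (-(1 / 2)) = 1 := by
  rw [mpow_mul_mpow hA, add_neg_cancel, mpow_zero hA.1]

lemma mpow_neg_half_mul_mpow_half (hA : A.PosDef) :
    mpow A (-(1 / 2)) * mpow A (1 / 2) = 1 := by
  rw [mpow_mul_mpow hA, neg_add_cancel, mpow_zero hA.1]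

lemma isHermitian_mpow_neg_half_conj (hA : A.PosDef) (hB : B.IsHermitian) :
    (mpow A (-(1 / 2)) * B * mpow A (-(1 / 2))).IsHermitian := by
  simpa only [(mpow_isHermitian hA.1 _).eq] using
    Matrix.isHermitian_conjTranspose_mul_mul (mpow A (-(1 / 2))) hB

lemma posDef_mpow_neg_half_conj (hA : A.PosDef) (hB : B.PosDef) :
    (mpow A (-(1 / 2)) * B * mpow A (-(1 / 2))).PosDef := by
  have hinj : Function.Injective (mpow A (-(1 / 2))).mulVec :=
    Function.LeftInverse.injective (g := (mpow A (1 / 2)).mulVec) fun x ↦ by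
      rw [Matrix.mulVec_mulVec, mpow_half_mul_mpow_neg_half hA, Matrix.one_mulVec]
  simpa only [(mpow_isHermitian hA.1 _).eq] using hB.conjTranspose_mul_mul_same hinj

lemma sharp_zero (hA : A.PosDef) (hB : B.IsHermitian) : sharp A B 0 = A := by
  rw [sharp, mpow_zero (isHermitian_mpow_neg_half_conj hA hB), Matrix.mul_one,
    mpow_half_mul_mpow_half hA]

lemma sharp_one (hA : A.PosDef) (hB : B.IsHermitian) : sharp A B 1 = B := by
  rw [sharp, mpow_one (isHermitian_mpow_neg_half_conj hA hB)]
  calc mpow A (1 / 2) * (mpow A (-(1 / 2)) * B * mpow A (-(1 / 2))) * mpow A (1 / 2)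
      = (mpow A (1 / 2) * mpow A (-(1 / 2))) * B * (mpow A (-(1 / 2)) * mpow A (1 / 2)) := by
        simp only [Matrix.mul_assoc]
    _ = B := by
        rw [mpow_half_mul_mpow_neg_half hA, mpow_neg_half_mul_mpow_half hA, Matrix.one_mul,
          Matrix.mul_one]

lemma heinz_zero (hA : A.PosDef) (hB : B.IsHermitian) :
    heinz A B 0 = ((1 : ℝ) / 2) • (A + B) := by
  rw [heinz, sub_zero, sharp_zero hA hB, sharp_one hA hB]

lemma heinz_one (hA : A.PosDef) (hB : B.IsHermitian) :
    heinz A B 1 = ((1 : ℝ) / 2) • (A + B) := by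
  rw [heinz, sub_self, sharp_zero hA hB, sharp_one hA hB, add_comm]

lemma heinz_eq_mpow_half_mul_cfc (hA : A.PosDef) (hB : B.IsHermitian) (μ : ℝ) :
    heinz A B μ = mpow A (1 / 2) *
      cfc (fun x : ℝ ↦ (x ^ μ + x ^ (1 - μ)) / 2) (mpow A (-(1 / 2)) * B * mpow A (-(1 / 2))) *
        mpow A (1 / 2) := by
  set C := mpow A (-(1 / 2)) * B * mpow A (-(1 / 2))
  have hc (g : ℝ → ℝ) := C.continuousOn_spectrum g
  have hcfc : cfc (fun x : ℝ ↦ (x ^ μ + x ^ (1 - μ)) / 2) C =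
      ((1 : ℝ) / 2) • (cfc (fun x : ℝ ↦ x ^ μ) C + cfc (fun x : ℝ ↦ x ^ (1 - μ)) C) := by
    rw [← cfc_add _ _ _ (hc _) (hc _), ← cfc_smul _ _ _ (hc _)]
    exact cfc_congr fun x _ ↦ by rw [smul_eq_mul]; ring
  rw [heinz, sharp, sharp, mpow_eq_cfc (isHermitian_mpow_neg_half_conj hA hB),
    mpow_eq_cfc (isHermitian_mpow_neg_half_conj hA hB), hcfc, mul_smul_comm, smul_mul_assoc,
    Matrix.mul_add, Matrix.add_mul]

theorem convexOn_heinz (hA : A.PosDef) (hB : B.PosDef) : ConvexOn ℝ univ (heinz A B) := by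
  have hC := posDef_mpow_neg_half_conj hA hB
  refine ((convexOn_cfc convex_univ fun x hx ↦ convexOn_rpow_add_rpow_one_sub
    (hC.isStrictlyPositive.spectrum_pos hx)).star_left_conjugate (mpow A (1 / 2))).congr
    fun μ _ ↦ ?_
  rw [heinz_eq_mpow_half_mul_cfc hA hB.1, Matrix.star_eq_conjTranspose,
    (mpow_isHermitian hA.1 _).eq]

end Heinz

theorem stmt14 (A B : Matrix (Fin d) (Fin d) ℂ) (hA : A.PosDef) (hB : B.PosDef)
    (ν : ℝ) (hν : ν ∈ Set.Ioo (0 : ℝ) 1) (n₀ : ℕ) :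
    (((1 : ℝ) / 2) • (A + B) -
      (heinz A B ν + ∑ k ∈ Finset.range (n₀ + 1), r ν k •
        (heinz A B (m ν k / 2 ^ k) - (2 : ℝ) • heinz A B ((2 * m ν k + 1) / 2 ^ (k + 1)) +
          heinz A B ((m ν k + 1) / 2 ^ k)))).PosSemidef := by
  have h := ((convexOn_heinz hA hB).subset (subset_univ _) (convex_Icc 0 1)).add_sum_dyadic_le
    hν.1.le hν.2 (n₀ + 1)
  rwa [heinz_zero hA hB.1, heinz_one hA hB.1, ← add_smul, sub_add_cancel, one_smul,
    Matrix.le_iff] at h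
end
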